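/- Let S be a nonempty subset of the nonnegative integers and X(S) the S-gap shift. Then X(S) has the specification property if and only if both of the following hold: the gaps between consecutive elements of S are bounded (there exists L such that for every s ∈ S that is not the maximum of S there exists t ∈ S with s < t ≤ s + L), and gcd{n + 1 : n ∈ S} = 1. -/

import Mathlib

open Set Filter

/-- The product topology on `ℤ → A`, where the alphabet `A` carries the
discrete topology. -/
def seqTop (A : Type*) : TopologicalSpace (ℤ → A) :=
  @Pi.topologicalSpace ℤ (fun _ => A) (fun _ => ⊥)

/-- The shift map `σ`, defined by `σ(x)_i = x_{i+1}`. -/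
def shiftMap {A : Type*} (x : ℤ → A) : ℤ → A := fun i => x (i + 1)

/-- A shift space: a nonempty, closed, shift-invariant subset of `A^ℤ`. -/
def IsShiftSpace {A : Type*} (X : Set (ℤ → A)) : Prop :=
  X.Nonempty ∧ @IsClosed _ (seqTop A) X ∧ shiftMap '' X = X

/-- The word `u` occurs in `x` at coordinate `i`. -/
def OccursAt {A : Type*} (x : ℤ → A) (u : List A) (i : ℤ) : Prop :=
  ∀ k : Fin u.length, x (i + ((k : ℕ) : ℤ)) = u.get k

/-- `u` is a word of the language `B(X)` of `X`. -/
def IsWordOf {A : Type*} (X : Set (ℤ → A)) (u : List A) : Prop :=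
  ∃ x ∈ X, OccursAt x u 0

/-- A shift of finite type: a shift space defined by finitely many
forbidden words. -/
def IsSFT {A : Type*} (X : Set (ℤ → A)) : Prop :=
  IsShiftSpace X ∧ ∃ F : Finset (List A),
    X = { x | ∀ u ∈ F, ∀ i : ℤ, ¬ OccursAt x u i }

/-- A code: a continuous shift-commuting map from `X` to `Y`. -/
def IsCode {A B : Type*} (X : Set (ℤ → A)) (Y : Set (ℤ → B))
    (φ : (ℤ → A) → (ℤ → B)) : Prop :=
  Set.MapsTo φ X Y ∧ @ContinuousOn _ _ (seqTop A) (seqTop B) φ X ∧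
    ∀ x ∈ X, φ (shiftMap x) = shiftMap (φ x)

/-- A factor code: a surjective code. -/
def IsFactorCode {A B : Type*} (X : Set (ℤ → A)) (Y : Set (ℤ → B))
    (φ : (ℤ → A) → (ℤ → B)) : Prop :=
  IsCode X Y φ ∧ Y ⊆ φ '' X

/-- A code is open if it maps (relatively) open subsets of `X` to
(relatively) open subsets of `Y`. -/
def IsOpenCode {A B : Type*} (X : Set (ℤ → A)) (Y : Set (ℤ → B))
    (φ : (ℤ → A) → (ℤ → B)) : Prop :=
  ∀ U : Set (ℤ → A), @IsOpen _ (seqTop A) U →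
    ∃ V : Set (ℤ → B), @IsOpen _ (seqTop B) V ∧ φ '' (X ∩ U) = Y ∩ V

/-- A code has a uniform lifting length `l`. -/
def HasUniformLiftingLength {A B : Type*} (X : Set (ℤ → A)) (Y : Set (ℤ → B))
    (φ : (ℤ → A) → (ℤ → B)) : Prop :=
  ∃ l : ℕ, ∀ k : ℕ, ∀ x ∈ X, ∀ y ∈ Y,
    (∀ i : ℤ, |i| ≤ (k : ℤ) + (l : ℤ) → φ x i = y i) →
    ∃ x' ∈ X, (∀ i : ℤ, |i| ≤ (k : ℤ) → x' i = x i) ∧ φ x' = y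

/-- Right continuing code. -/
def IsRightContinuing {A B : Type*} (X : Set (ℤ → A)) (Y : Set (ℤ → B))
    (φ : (ℤ → A) → (ℤ → B)) : Prop :=
  ∀ x ∈ X, ∀ y ∈ Y, (∃ M : ℤ, ∀ i ≤ M, φ x i = y i) →
    ∃ x' ∈ X, (∃ M : ℤ, ∀ i ≤ M, x' i = x i) ∧ φ x' = y

/-- Left continuing code. -/
def IsLeftContinuing {A B : Type*} (X : Set (ℤ → A)) (Y : Set (ℤ → B))
    (φ : (ℤ → A) → (ℤ → B)) : Prop :=
  ∀ x ∈ X, ∀ y ∈ Y, (∃ M : ℤ, ∀ i, M ≤ i → φ x i = y i) →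
    ∃ x' ∈ X, (∃ M : ℤ, ∀ i, M ≤ i → x' i = x i) ∧ φ x' = y

/-- `n` is a right continuing retract of `φ`. -/
def IsRightRetract {A B : Type*} (X : Set (ℤ → A)) (Y : Set (ℤ → B))
    (φ : (ℤ → A) → (ℤ → B)) (n : ℕ) : Prop :=
  ∀ x ∈ X, ∀ y ∈ Y, (∀ i : ℤ, i ≤ 0 → φ x i = y i) →
    ∃ x' ∈ X, φ x' = y ∧ ∀ i : ℤ, i ≤ -(n : ℤ) → x' i = x i

/-- `n` is a left continuing retract of `φ`. -/
def IsLeftRetract {A B : Type*} (X : Set (ℤ → A)) (Y : Set (ℤ → B))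
    (φ : (ℤ → A) → (ℤ → B)) (n : ℕ) : Prop :=
  ∀ x ∈ X, ∀ y ∈ Y, (∀ i : ℤ, 0 ≤ i → φ x i = y i) →
    ∃ x' ∈ X, φ x' = y ∧ ∀ i : ℤ, (n : ℤ) ≤ i → x' i = x i

/-- Right closing code. -/
def IsRightClosing {A B : Type*} (X : Set (ℤ → A))
    (φ : (ℤ → A) → (ℤ → B)) : Prop :=
  ∀ x ∈ X, ∀ x' ∈ X, (∃ M : ℤ, ∀ i ≤ M, x i = x' i) → φ x = φ x' → x = x'

/-- Left closing code. -/
def IsLeftClosing {A B : Type*} (X : Set (ℤ → A))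
    (φ : (ℤ → A) → (ℤ → B)) : Prop :=
  ∀ x ∈ X, ∀ x' ∈ X, (∃ M : ℤ, ∀ i, M ≤ i → x i = x' i) → φ x = φ x' → x = x'

/-- A sofic shift: a factor of a shift of finite type. -/
def IsSofic {B : Type*} (Y : Set (ℤ → B)) : Prop :=
  ∃ (C : Type) (_ : Fintype C) (Z : Set (ℤ → C)) (π : (ℤ → C) → (ℤ → B)),
    IsSFT Z ∧ IsFactorCode Z Y π

/-- Irreducibility of a shift space. -/
def IsIrreducibleShift {A : Type*} (X : Set (ℤ → A)) : Prop :=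
  ∀ u v : List A, IsWordOf X u → IsWordOf X v →
    ∃ w : List A, IsWordOf X (u ++ w ++ v)

/-- Mixing shift space. -/
def IsMixingShift {A : Type*} (X : Set (ℤ → A)) : Prop :=
  ∀ u v : List A, IsWordOf X u → IsWordOf X v →
    ∃ N : ℕ, ∀ n : ℕ, N ≤ n →
      ∃ w : List A, w.length = n ∧ IsWordOf X (u ++ w ++ v)

/-- The almost specification property. -/
def AlmostSpecified {A : Type*} (X : Set (ℤ → A)) : Prop :=
  ∃ N : ℕ, ∀ u v : List A, IsWordOf X u → IsWordOf X v →
    ∃ w : List A, w.length ≤ N ∧ IsWordOf X (u ++ w ++ v)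

/-- The specification property. -/
def HasSpecification {A : Type*} (X : Set (ℤ → A)) : Prop :=
  ∃ N : ℕ, ∀ u v : List A, IsWordOf X u → IsWordOf X v →
    ∃ w : List A, w.length = N ∧ IsWordOf X (u ++ w ++ v)

/-- A synchronizing word of `X`. -/
def IsSynchronizingWord {A : Type*} (X : Set (ℤ → A)) (v : List A) : Prop :=
  IsWordOf X v ∧ ∀ u w : List A, IsWordOf X (u ++ v) → IsWordOf X (v ++ w) →
    IsWordOf X (u ++ v ++ w)

/-- A synchronized system: an irreducible shift space with a synchronizing
word. -/
def IsSynchronizedSystem {A : Type*} (X : Set (ℤ → A)) : Prop :=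
  IsIrreducibleShift X ∧ ∃ v : List A, IsSynchronizingWord X v

/-- A subshift of `X`. -/
def IsSubshiftOf {A : Type*} (X' X : Set (ℤ → A)) : Prop :=
  IsShiftSpace X' ∧ X' ⊆ X

/-- The number of words of length `n` in the language of `X`. -/
noncomputable def wordCount {A : Type*} (X : Set (ℤ → A)) (n : ℕ) : ℕ :=
  Set.ncard { u : List A | u.length = n ∧ IsWordOf X u }

/-- The entropy `h(X) = lim (1/n) log |B_n(X)|` of a shift space (the limit
exists by subadditivity, hence equals the limsup used here). -/
noncomputable def entropy {A : Type*} (X : Set (ℤ → A)) : ℝ :=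
  Filter.limsup (fun n : ℕ => Real.log (wordCount X n) / (n : ℝ)) Filter.atTop

/-- The periodic condition `P(X) ↘ P(Y)`. -/
def PeriodicCondition {A B : Type*} (X : Set (ℤ → A)) (Y : Set (ℤ → B)) : Prop :=
  ∀ n : ℕ, 0 < n → (∃ x ∈ X, shiftMap^[n] x = x) → ∃ y ∈ Y, shiftMap^[n] y = y

/-- A cyclic cover `D_0, …, D_{p-1}` of a shift space `X`. -/
def IsCyclicCover {A : Type*} (X : Set (ℤ → A)) (p : ℕ)
    (D : ZMod p → Set (ℤ → A)) : Prop :=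
  0 < p ∧
  (∀ i, @IsClosed _ (seqTop A) (D i) ∧ D i ⊆ X) ∧
  (⋃ i, D i) = X ∧
  (∀ i, shiftMap '' D i = D (i + 1)) ∧
  (∀ i, ∀ U V : Set (ℤ → A), @IsOpen _ (seqTop A) U → @IsOpen _ (seqTop A) V →
    (D i ∩ U).Nonempty → (D i ∩ V).Nonempty →
    ∃ N : ℕ, ∀ n : ℕ, N ≤ n →
      ((shiftMap^[p * n] '' (D i ∩ U)) ∩ (D i ∩ V)).Nonempty) ∧
  (∀ i j, i ≠ j → ∀ U : Set (ℤ → A), @IsOpen _ (seqTop A) U →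
    X ∩ U ⊆ D i ∩ D j → X ∩ U = ∅)

/-- A left ray of `X`, recorded as `z : ℕ → A` where `z n` is the symbol at
coordinate `-(n+1)`. -/
def IsLeftRay {A : Type*} (X : Set (ℤ → A)) (z : ℕ → A) : Prop :=
  ∃ x ∈ X, ∀ n : ℕ, x (-((n : ℤ) + 1)) = z n

/-- Append the finite word `w` on the right of a left-infinite sequence `z`
(the last symbol of `w` ends up at coordinate `-1`). -/
def rayAppend {A : Type*} (z : ℕ → A) (w : List A) : ℕ → A :=
  fun n => if h : n < w.length then w.reverse.get ⟨n, by simpa using h⟩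
           else z (n - w.length)

/-- A left transitive point: every word of `X` occurs in `x_{(-∞,0]}`. -/
def IsLeftTransitive {A : Type*} (X : Set (ℤ → A)) (x : ℤ → A) : Prop :=
  ∀ u : List A, IsWordOf X u → ∃ i : ℤ, i + (u.length : ℤ) ≤ 1 ∧ OccursAt x u i

/-- A right transitive point: every word of `X` occurs in `x_{[0,∞)}`. -/
def IsRightTransitive {A : Type*} (X : Set (ℤ → A)) (x : ℤ → A) : Prop :=
  ∀ u : List A, IsWordOf X u → ∃ i : ℤ, 0 ≤ i ∧ OccursAt x u i

/-- Right continuing almost everywhere. -/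
def IsRightContinuingAE {A B : Type*} (X : Set (ℤ → A)) (Y : Set (ℤ → B))
    (φ : (ℤ → A) → (ℤ → B)) : Prop :=
  ∀ x ∈ X, IsLeftTransitive X x → ∀ y ∈ Y, (∃ M : ℤ, ∀ i ≤ M, φ x i = y i) →
    ∃ x' ∈ X, (∃ M : ℤ, ∀ i ≤ M, x' i = x i) ∧ φ x' = y

/-- Left continuing almost everywhere. -/
def IsLeftContinuingAE {A B : Type*} (X : Set (ℤ → A)) (Y : Set (ℤ → B))
    (φ : (ℤ → A) → (ℤ → B)) : Prop :=
  ∀ x ∈ X, IsRightTransitive X x → ∀ y ∈ Y, (∃ M : ℤ, ∀ i, M ≤ i → φ x i = y i) →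
    ∃ x' ∈ X, (∃ M : ℤ, ∀ i, M ≤ i → x' i = x i) ∧ φ x' = y

/-- The bi-infinite concatenations of blocks `1 0^s`, `s ∈ S`: the positions of
`1`s in `x` form the range of a strictly monotone `t : ℤ → ℤ` whose
consecutive gaps `t (n+1) - t n` all equal `s + 1` for some `s ∈ S`. -/
def GapConcat (S : Set ℕ) : Set (ℤ → Bool) :=
  { x | ∃ t : ℤ → ℤ, StrictMono t ∧ (∀ n : ℤ, ∃ s ∈ S, t (n + 1) = t n + (s : ℤ) + 1) ∧
      (∀ i : ℤ, x i = true ↔ ∃ n : ℤ, t n = i) }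

/-- The `S`-gap shift: the smallest shift space over `{0,1}` containing all
bi-infinite concatenations of blocks from `{1 0^s : s ∈ S}`. -/
def SGapShift (S : Set ℕ) : Set (ℤ → Bool) :=
  ⋂₀ { X : Set (ℤ → Bool) | IsShiftSpace X ∧ GapConcat S ⊆ X }

/-!
The word `1` is synchronizing: two concatenations of blocks `1 0^s` having a `1` at the same
coordinate can be cut there and glued. Since the concatenations already form a shift-invariant
set, their closure is `X(S)`, and the words of `X(S)` are the words of the concatenations.

If the gaps of `S` are bounded, a point can be cut at its last `1` before a given coordinate `p`
and continued by a gap from `S` that covers the zeros up to `p` and exceeds them by at most a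
constant `K`; symmetrically to the left. If moreover `gcd {s + 1} = 1`, every large enough
distance is a sum of lengths `s + 1` (Frobenius), so the two extended points are joined by blocks
`1 0^s` across any window of length `N ≥ F + 2K + 1`.

Conversely, specification with transition length `N` applied to `1 0^(s+1)` and `1` produces a
gap `s' ∈ S` with `s < s' ≤ s + N + 1`, and applied to `1` followed by `1` or by `0^s 1` (`s ∈ S`)
shows that any `d` dividing every `s + 1` divides `N + 1` and `N + 1 + s`, hence `s` and `1`.
-/

theorem Int.add_sub_le_of_strictMono {t : ℤ → ℤ} (ht : StrictMono t) {a b : ℤ} (hab : a ≤ b) :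
    t a + (b - a) ≤ t b := by
  induction b, hab using Int.leInduction with
  | base => simp
  | succ b _ ih => have := ht (lt_add_one b); omega

theorem Int.exists_lt_le_succ_of_strictMono {t : ℤ → ℤ} (ht : StrictMono t) (p : ℤ) :
    ∃ n, t n < p ∧ p ≤ t (n + 1) := by
  obtain ⟨n₀, hn₀⟩ : ∃ n, t n < p :=
    ⟨min 0 (p - t 0 - 1), by
      have := Int.add_sub_le_of_strictMono ht (min_le_left 0 (p - t 0 - 1))
      omega⟩
  obtain ⟨n, hn, hleast⟩ := Int.exists_least_of_bdd (P := fun n => p ≤ t n)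
    ⟨n₀, fun n hn => (ht.lt_iff_lt.1 (hn₀.trans_le hn)).le⟩
    ⟨max 0 (p - t 0), by
      have := Int.add_sub_le_of_strictMono ht (le_max_left 0 (p - t 0))
      omega⟩
  refine ⟨n - 1, not_le.1 fun h => ?_, by simpa using hn⟩
  have := hleast _ h
  omega

theorem StrictMono.exists_eq_iff_of_eqOn_Iic {α β : Type*} [LinearOrder α] [LinearOrder β]
    {f g : α → β} (hf : StrictMono f) (hg : StrictMono g) {n₀ : α} (hfg : ∀ n ≤ n₀, f n = g n)
    {i : β} (hi : i ≤ f n₀) : (∃ n, f n = i) ↔ ∃ n, g n = i := by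
  have key : ∀ {f g : α → β}, StrictMono f → (∀ n ≤ n₀, f n = g n) → i ≤ f n₀ →
      (∃ n, f n = i) → ∃ n, g n = i := by
    rintro f g hf hfg hi ⟨n, rfl⟩
    exact ⟨n, (hfg n (hf.le_iff_le.1 hi)).symm⟩
  exact ⟨key hf hfg hi, key hg (fun n hn => (hfg n hn).symm) (hfg n₀ le_rfl ▸ hi)⟩

theorem StrictMono.exists_eq_iff_of_eqOn_Ici {α β : Type*} [LinearOrder α] [LinearOrder β]
    {f g : α → β} (hf : StrictMono f) (hg : StrictMono g) {n₀ : α} (hfg : ∀ n, n₀ ≤ n → f n = g n)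
    {i : β} (hi : f n₀ ≤ i) : (∃ n, f n = i) ↔ ∃ n, g n = i :=
  StrictMono.exists_eq_iff_of_eqOn_Iic (α := αᵒᵈ) (β := βᵒᵈ) hf.dual hg.dual hfg hi

def BoundedGaps (S : Set ℕ) (K : ℕ) : Prop :=
  ∀ c : ℕ, (∃ s ∈ S, c ≤ s) → ∃ s ∈ S, c ≤ s ∧ s ≤ c + K

theorem boundedGaps_of_forall_exists_le_add {S : Set ℕ} {L s₀ : ℕ} (hs₀ : s₀ ∈ S)
    (hL : ∀ s ∈ S, (∃ t ∈ S, s < t) → ∃ t ∈ S, s < t ∧ t ≤ s + L) : BoundedGaps S (L + s₀) := by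
  intro c hc
  induction c with
  | zero => exact ⟨s₀, hs₀, Nat.zero_le _, by omega⟩
  | succ c ih =>
    obtain ⟨s, hs, hcs⟩ := hc
    obtain ⟨t, ht, hct, htc⟩ := ih ⟨s, hs, by omega⟩
    rcases hct.lt_or_eq with hct | rfl
    · exact ⟨t, ht, hct, by omega⟩
    · obtain ⟨t', ht', hlt, hle⟩ := hL c ht ⟨s, hs, by omega⟩
      exact ⟨t', ht', hlt, by omega⟩

theorem Nat.exists_forall_ge_mem_closure_succ {S : Set ℕ}
    (hgcd : ∀ d : ℕ, (∀ n ∈ S, d ∣ n + 1) → d = 1) :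
    ∃ F, ∀ m ≥ F, m ∈ AddSubmonoid.closure ((· + 1) '' S) := by
  obtain ⟨F, hF⟩ := Nat.exists_mem_closure_of_ge ((· + 1) '' S)
  have hone : Nat.setGcd ((· + 1) '' S) = 1 := hgcd _ fun n hn => Nat.setGcd_dvd_of_mem ⟨n, hn, rfl⟩
  exact ⟨F, fun m hm => hF m hm (by rw [hone]; exact one_dvd m)⟩

section OccursAt

variable {A : Type*} {x y : ℤ → A} {u v : List A} {i j : ℤ}

theorem occursAt_iff : OccursAt x u i ↔ ∀ k (hk : k < u.length), x (i + k) = u[k] :=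
  ⟨fun h k hk => h ⟨k, hk⟩, fun h k => h k k.2⟩

theorem OccursAt.congr (h : OccursAt x u i) (hyx : ∀ k < u.length, y (j + k) = x (i + k)) :
    OccursAt y u j :=
  fun k => (hyx k k.2).trans (h k)

theorem occursAt_append :
    OccursAt x (u ++ v) i ↔ OccursAt x u i ∧ OccursAt x v (i + u.length) := by
  simp only [occursAt_iff, List.length_append]
  refine ⟨fun h => ⟨fun k hk => ?_, fun k hk => ?_⟩, fun ⟨hu, hv⟩ k hk => ?_⟩
  · simpa [List.getElem_append_left hk] using h k (by omega)
  · have := h (u.length + k) (by omega)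
    rw [List.getElem_append_right (by omega)] at this
    simpa [add_assoc] using this
  · rcases lt_or_ge k u.length with hku | hku
    · rw [List.getElem_append_left hku]; exact hu k hku
    · rw [List.getElem_append_right hku]
      have := hv (k - u.length) (by omega)
      rwa [Nat.cast_sub hku, add_assoc, add_sub_cancel] at this

theorem occursAt_singleton {a : A} : OccursAt x [a] i ↔ x i = a := by
  simp [occursAt_iff]

theorem occursAt_replicate {n : ℕ} {a : A} :
    OccursAt x (List.replicate n a) i ↔ ∀ k < n, x (i + k) = a := by
  simp [occursAt_iff]

theorem occursAt_ofFn (n : ℕ) : OccursAt x (List.ofFn fun k : Fin n => x (i + k)) i := by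
  simp [occursAt_iff]

end OccursAt

section Topology

variable {A : Type*} [TopologicalSpace A]

def shiftHomeomorph : (ℤ → A) ≃ₜ (ℤ → A) where
  toFun := shiftMap
  invFun x i := x (i - 1)
  left_inv x := funext fun i => by simp [shiftMap]
  right_inv x := funext fun i => by simp [shiftMap]
  continuous_toFun := continuous_pi fun i => continuous_apply (i + 1)
  continuous_invFun := continuous_pi fun i => continuous_apply (i - 1)

theorem shiftMap_image_closure (G : Set (ℤ → A)) :
    shiftMap '' closure G = closure (shiftMap '' G) :=
  shiftHomeomorph.image_closure G

variable [DiscreteTopology A]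

theorem seqTop_eq : seqTop A = Pi.topologicalSpace := by
  rw [seqTop, DiscreteTopology.eq_bot (α := A)]

theorem isShiftSpace_closure {G : Set (ℤ → A)} (hne : G.Nonempty) (hG : shiftMap '' G = G) :
    IsShiftSpace (closure G) := by
  refine ⟨hne.mono subset_closure, ?_, by rw [shiftMap_image_closure, hG]⟩
  rw [seqTop_eq]
  exact isClosed_closure

theorem isOpen_setOf_occursAt (u : List A) (i : ℤ) : IsOpen {x : ℤ → A | OccursAt x u i} := by
  simp only [OccursAt, Set.ofPred_forall]
  refine isOpen_iInter_of_finite fun k => ?_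
  exact (continuous_apply (A := fun _ : ℤ => A) (i + (k : ℕ))).isOpen_preimage {u.get k}
    (isOpen_discrete _)

theorem isWordOf_sInter_iff {G : Set (ℤ → A)} (hne : G.Nonempty) (hG : shiftMap '' G = G)
    {u : List A} : IsWordOf (⋂₀ {X | IsShiftSpace X ∧ G ⊆ X}) u ↔ ∃ x ∈ G, OccursAt x u 0 := by
  constructor
  · rintro ⟨x, hx, hxu⟩
    have hxG : x ∈ closure G := mem_sInter.1 hx _ ⟨isShiftSpace_closure hne hG, subset_closure⟩
    obtain ⟨y, hyu, hyG⟩ := mem_closure_iff.1 hxG _ (isOpen_setOf_occursAt u 0) hxu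
    exact ⟨y, hyG, hyu⟩
  · rintro ⟨x, hx, hxu⟩
    exact ⟨x, mem_sInter.2 fun X hX => hX.2 hx, hxu⟩

end Topology

def ConsecutiveOnes (x : ℤ → Bool) (a b : ℤ) : Prop :=
  x a = true ∧ x b = true ∧ ∀ i, a < i → i < b → x i = false

namespace GapConcat

variable {S : Set ℕ} {x y : ℤ → Bool} {t : ℤ → ℤ} {a : ℤ} {s K : ℕ}

theorem strictMono_of_gaps (ht : ∀ n, ∃ s ∈ S, t (n + 1) = t n + s + 1) : StrictMono t :=
  strictMono_int_of_lt_succ fun n => by obtain ⟨s, -, h⟩ := ht n; omega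

theorem mem_iff : x ∈ GapConcat S ↔ ∃ t : ℤ → ℤ, (∀ n, ∃ s ∈ S, t (n + 1) = t n + s + 1) ∧
    ∀ i, x i = true ↔ ∃ n, t n = i :=
  ⟨fun ⟨t, _, ht, hx⟩ => ⟨t, ht, hx⟩, fun ⟨t, ht, hx⟩ => ⟨t, strictMono_of_gaps ht, ht, hx⟩⟩

theorem exists_of_gaps (ht : ∀ n, ∃ s ∈ S, t (n + 1) = t n + s + 1) :
    ∃ x ∈ GapConcat S, ∀ i, x i = true ↔ ∃ n, t n = i := by
  classical
  exact ⟨fun i => decide (∃ n, t n = i), mem_iff.2 ⟨t, ht, fun _ => decide_eq_true_iff⟩,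
    fun _ => decide_eq_true_iff⟩

theorem exists_gaps_of_eq_true (hx : x ∈ GapConcat S) (ha : x a = true) :
    ∃ t : ℤ → ℤ, (∀ n, ∃ s ∈ S, t (n + 1) = t n + s + 1) ∧
      (∀ i, x i = true ↔ ∃ n, t n = i) ∧ t 0 = a := by
  obtain ⟨t, ht, hxt⟩ := mem_iff.1 hx
  obtain ⟨m, rfl⟩ := (hxt a).1 ha
  refine ⟨fun n => t (n + m), fun n => by simpa [add_right_comm] using ht (n + m),
    fun i => (hxt i).trans ⟨fun ⟨n, hn⟩ => ⟨n - m, by simpa⟩, fun ⟨n, hn⟩ => ⟨n + m, hn⟩⟩, by simp⟩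

theorem translate_mem (hx : x ∈ GapConcat S) (c : ℤ) : (fun i => x (i + c)) ∈ GapConcat S := by
  obtain ⟨t, ht, hxt⟩ := mem_iff.1 hx
  refine mem_iff.2 ⟨fun n => t n - c, fun n => ?_, fun i => (hxt _).trans ?_⟩
  · obtain ⟨s, hs, h⟩ := ht n
    exact ⟨s, hs, by simp only; omega⟩
  · exact exists_congr fun n => sub_eq_iff_eq_add.symm

theorem shiftMap_image : shiftMap '' GapConcat S = GapConcat S :=
  Subset.antisymm (image_subset_iff.2 fun _ hx => translate_mem hx 1)
    fun x hx => ⟨fun i => x (i + -1), translate_mem hx (-1), funext fun i => by simp [shiftMap]⟩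

theorem consecutiveOnes_of_gaps (ht : StrictMono t) (hx : ∀ i, x i = true ↔ ∃ n, t n = i)
    (n : ℤ) : ConsecutiveOnes x (t n) (t (n + 1)) := by
  refine ⟨(hx _).2 ⟨n, rfl⟩, (hx _).2 ⟨n + 1, rfl⟩, fun i h₁ h₂ => ?_⟩
  rw [← Bool.not_eq_true, hx]
  rintro ⟨m, rfl⟩
  have := ht.lt_iff_lt.1 h₁
  have := ht.lt_iff_lt.1 h₂
  omega

theorem exists_consecutiveOnes (hs : s ∈ S) (a : ℤ) :
    ∃ x ∈ GapConcat S, ConsecutiveOnes x a (a + s + 1) := by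
  have ht : ∀ n : ℤ, ∃ s' ∈ S, a + (n + 1) * (s + 1) = a + n * (s + 1) + s' + 1 :=
    fun n => ⟨s, hs, by ring⟩
  obtain ⟨x, hx, hxt⟩ := exists_of_gaps (t := fun n => a + n * (s + 1)) ht
  refine ⟨x, hx, ?_⟩
  simpa [add_assoc] using consecutiveOnes_of_gaps (strictMono_of_gaps ht) hxt 0

theorem nonempty (hS : S.Nonempty) : (GapConcat S).Nonempty :=
  let ⟨_, hs⟩ := hS
  let ⟨x, hx, _⟩ := exists_consecutiveOnes hs 0
  ⟨x, hx⟩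

theorem exists_consecutiveOnes_around (hx : x ∈ GapConcat S) (p : ℤ) :
    ∃ a < p, ∃ s ∈ S, p ≤ a + s + 1 ∧ ConsecutiveOnes x a (a + s + 1) := by
  obtain ⟨t, ht, hxt⟩ := mem_iff.1 hx
  have hmono := strictMono_of_gaps ht
  obtain ⟨n, hlt, hle⟩ := Int.exists_lt_le_succ_of_strictMono hmono p
  obtain ⟨s, hs, h⟩ := ht n
  exact ⟨t n, hlt, s, hs, h ▸ hle, h ▸ consecutiveOnes_of_gaps hmono hxt n⟩

theorem exists_consecutiveOnes_of_eq_true (hx : x ∈ GapConcat S) (ha : x a = true) :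
    ∃ s ∈ S, ConsecutiveOnes x a (a + s + 1) := by
  obtain ⟨a', ha', s, hs, hle, hones⟩ := exists_consecutiveOnes_around hx (a + 1)
  obtain rfl : a' = a := by
    by_contra hne
    have := hones.2.2 a (by omega) (by omega)
    simp [ha] at this
  exact ⟨s, hs, hones⟩

theorem exists_glue (hx : x ∈ GapConcat S) (hy : y ∈ GapConcat S) (hxa : x a = true)
    (hya : y a = true) :
    ∃ z ∈ GapConcat S, (∀ i ≤ a, z i = x i) ∧ ∀ i, a ≤ i → z i = y i := by
  obtain ⟨tx, htx, hxt, rfl⟩ := exists_gaps_of_eq_true hx hxa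
  obtain ⟨ty, hty, hyt, hty0⟩ := exists_gaps_of_eq_true hy hya
  set T : ℤ → ℤ := fun n => if n < 0 then tx n else ty n with hT
  have hTx : ∀ n ≤ 0, T n = tx n := fun n hn => by
    rcases hn.lt_or_eq with hn | rfl
    · simp [hT, hn]
    · simp [hT, hty0]
  have hTy : ∀ n, 0 ≤ n → T n = ty n := fun n hn => by simp [hT, not_lt.2 hn]
  have hTgap : ∀ n, ∃ s ∈ S, T (n + 1) = T n + s + 1 := fun n => by
    rcases lt_or_ge n 0 with hn | hn
    · rw [hTx n hn.le, hTx (n + 1) (by omega)]; exact htx n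
    · rw [hTy n hn, hTy (n + 1) (by omega)]; exact hty n
  obtain ⟨z, hz, hzT⟩ := exists_of_gaps hTgap
  have hTm := strictMono_of_gaps hTgap
  refine ⟨z, hz, fun i hi => Bool.eq_iff_iff.2 ?_, fun i hi => Bool.eq_iff_iff.2 ?_⟩
  · rw [hzT, hxt]
    exact hTm.exists_eq_iff_of_eqOn_Iic (strictMono_of_gaps htx) hTx (by rwa [hTx 0 le_rfl])
  · rw [hzT, hyt]
    exact hTm.exists_eq_iff_of_eqOn_Ici (strictMono_of_gaps hty) hTy
      (by rwa [hTy 0 le_rfl, hty0])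

theorem exists_eq_true_of_mem_closure (hS : S.Nonempty) {m : ℕ}
    (hm : m ∈ AddSubmonoid.closure ((· + 1) '' S)) (a : ℤ) :
    ∃ x ∈ GapConcat S, x a = true ∧ x (a + m) = true := by
  induction hm using AddSubmonoid.closure_induction generalizing a with
  | mem _ h =>
    obtain ⟨s, hs, rfl⟩ := h
    obtain ⟨x, hx, h₁, h₂, -⟩ := exists_consecutiveOnes hs a
    exact ⟨x, hx, h₁, by rwa [Nat.cast_succ, ← add_assoc]⟩
  | zero =>
    obtain ⟨s, hs⟩ := hS
    obtain ⟨x, hx, h₁, -⟩ := exists_consecutiveOnes hs a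
    exact ⟨x, hx, h₁, by rwa [Nat.cast_zero, add_zero]⟩
  | add m₁ m₂ _ _ ih₁ ih₂ =>
    obtain ⟨x₁, hx₁, h₁a, h₁b⟩ := ih₁ a
    obtain ⟨x₂, hx₂, h₂a, h₂b⟩ := ih₂ (a + m₁)
    obtain ⟨z, hz, hz₁, hz₂⟩ := exists_glue hx₁ hx₂ h₁b h₂a
    refine ⟨z, hz, by rwa [hz₁ a (by omega)], ?_⟩
    rw [hz₂ _ (by omega), Nat.cast_add, ← add_assoc]
    exact h₂b

theorem dvd_sub_of_eq_true {d : ℕ} (hd : ∀ s ∈ S, d ∣ s + 1) (hx : x ∈ GapConcat S)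
    {b : ℤ} (ha : x a = true) (hb : x b = true) : (d : ℤ) ∣ b - a := by
  obtain ⟨t, ht, hxt⟩ := mem_iff.1 hx
  have step : ∀ n, (d : ℤ) ∣ t (n + 1) - t n := fun n => by
    obtain ⟨s, hs, h⟩ := ht n
    rw [h, show t n + s + 1 - t n = ((s + 1 : ℕ) : ℤ) by push_cast; ring]
    exact Int.natCast_dvd_natCast.2 (hd s hs)
  have key : ∀ n, (d : ℤ) ∣ t n - t 0 := fun n => by
    induction n using Int.induction_on with
    | zero => simp
    | succ n ih => exact sub_add_sub_cancel (t _) (t n) (t 0) ▸ dvd_add (step n) ih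
    | pred n ih =>
      have := dvd_sub ih (step (-n - 1))
      rwa [sub_add_cancel, sub_sub_sub_cancel_left] at this
  obtain ⟨m, rfl⟩ := (hxt a).1 ha
  obtain ⟨n, rfl⟩ := (hxt b).1 hb
  simpa using dvd_sub (key n) (key m)


theorem exists_extend_right (hK : BoundedGaps S K) (hx : x ∈ GapConcat S) (p : ℤ) :
    ∃ x' ∈ GapConcat S, (∀ i < p, x' i = x i) ∧ ∃ e ≤ K, x' (p + e) = true := by
  obtain ⟨a, hap, s, hs, hps, hones⟩ := exists_consecutiveOnes_around hx p
  obtain ⟨s', hs', hle, hle'⟩ := hK (p - 1 - a).toNat ⟨s, hs, by omega⟩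
  obtain ⟨w, hw, hwones⟩ := exists_consecutiveOnes hs' a
  obtain ⟨z, hz, hzx, hzw⟩ := exists_glue hx hw hones.1 hwones.1
  refine ⟨z, hz, fun i hi => ?_, (a + s' + 1 - p).toNat, by omega, ?_⟩
  · rcases le_or_gt i a with h | h
    · exact hzx i h
    · rw [hzw i h.le, hwones.2.2 i h (by omega), hones.2.2 i h (by omega)]
  · rw [hzw _ (by omega), show p + (a + s' + 1 - p).toNat = a + s' + 1 by omega]
    exact hwones.2.1

theorem exists_extend_left (hK : BoundedGaps S K) (hy : y ∈ GapConcat S) (p : ℤ) :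
    ∃ y' ∈ GapConcat S, (∀ i, p ≤ i → y' i = y i) ∧ ∃ e ≤ K, y' (p - 1 - e) = true := by
  obtain ⟨a, hap, s, hs, hps, hones⟩ := exists_consecutiveOnes_around hy p
  obtain ⟨s', hs', hle, hle'⟩ := hK (a + s + 1 - p).toNat ⟨s, hs, by omega⟩
  obtain ⟨w, hw, hwones⟩ := exists_consecutiveOnes hs' (a + s - s')
  rw [show a + s - s' + s' + 1 = a + s + 1 by ring] at hwones
  obtain ⟨z, hz, hzw, hzy⟩ := exists_glue hw hy hwones.2.1 hones.2.1
  refine ⟨z, hz, fun i hi => ?_, (s' - (a + s + 1 - p)).toNat, by omega, ?_⟩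
  · rcases le_or_gt (a + s + 1) i with h | h
    · exact hzy i h
    · rw [hzw i h.le, hwones.2.2 i (by omega) h, hones.2.2 i (by omega) h]
  · rw [hzw _ (by omega), show p - 1 - (s' - (a + s + 1 - p)).toNat = a + s - s' by omega]
    exact hwones.1

theorem exists_splice (hS : S.Nonempty) (hK : BoundedGaps S K) {F : ℕ}
    (hF : ∀ m ≥ F, m ∈ AddSubmonoid.closure ((· + 1) '' S)) {N : ℕ} (hN : F + 2 * K + 1 ≤ N)
    (hx : x ∈ GapConcat S) (hy : y ∈ GapConcat S) (p : ℤ) :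
    ∃ z ∈ GapConcat S, (∀ i < p, z i = x i) ∧ ∀ i, p + N ≤ i → z i = y (i - (p + N)) := by
  obtain ⟨x', hx', hx'x, e₁, he₁, hx'e⟩ := exists_extend_right hK hx p
  obtain ⟨y', hy', hy'y, e₂, he₂, hy'e⟩ :=
    exists_extend_left hK (translate_mem hy (-(p + N))) (p + N)
  -- the extensions use at most `2 * K` of the `N` symbols, the rest is a sum of gaps `s + 1`
  obtain ⟨w, hw, hw₁, hw₂⟩ :=
    exists_eq_true_of_mem_closure hS (hF (N - 1 - e₁ - e₂) (by omega)) (p + e₁)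
  rw [show p + e₁ + (N - 1 - e₁ - e₂ : ℕ) = p + N - 1 - e₂ by omega] at hw₂
  obtain ⟨z₁, hz₁, hz₁x', hz₁w⟩ := exists_glue hx' hw hx'e hw₁
  obtain ⟨z, hz, hzz₁, hzy'⟩ := exists_glue hz₁ hy' (by rwa [hz₁w _ (by omega)]) hy'e
  refine ⟨z, hz, fun i hi => ?_, fun i hi => ?_⟩
  · rw [hzz₁ i (by omega), hz₁x' i (by omega), hx'x i hi]
  · rw [hzy' i (by omega), hy'y i hi, sub_eq_add_neg]

end GapConcat

namespace SGapShift

variable {S : Set ℕ} {s c : ℕ}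

theorem gapConcat_subset : GapConcat S ⊆ SGapShift S :=
  fun _ hx => mem_sInter.2 fun _ hX => hX.2 hx

theorem isWordOf_iff (hS : S.Nonempty) {u : List Bool} :
    IsWordOf (SGapShift S) u ↔ ∃ x ∈ GapConcat S, OccursAt x u 0 :=
  isWordOf_sInter_iff (GapConcat.nonempty hS) GapConcat.shiftMap_image

theorem isWordOf_true_append_replicate (hs : s ∈ S) (hc : c ≤ s) :
    IsWordOf (SGapShift S) ([true] ++ List.replicate c false) := by
  obtain ⟨x, hx, h₀, -, hzero⟩ := GapConcat.exists_consecutiveOnes hs 0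
  refine ⟨x, gapConcat_subset hx, occursAt_append.2 ⟨occursAt_singleton.2 h₀, ?_⟩⟩
  exact occursAt_replicate.2 fun k hk => hzero _ (by simp; omega) (by simp; omega)

theorem isWordOf_replicate_append_true (hs : s ∈ S) (hc : c ≤ s) :
    IsWordOf (SGapShift S) (List.replicate c false ++ [true]) := by
  obtain ⟨x, hx, -, h₁, hzero⟩ := GapConcat.exists_consecutiveOnes hs ((c : ℤ) - s - 1)
  refine ⟨x, gapConcat_subset hx, occursAt_append.2 ⟨?_, occursAt_singleton.2 ?_⟩⟩
  · exact occursAt_replicate.2 fun k hk => hzero _ (by omega) (by omega)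
  · simpa [show (c : ℤ) - s - 1 + s + 1 = c by ring] using h₁

theorem exists_gap_bound_of_hasSpecification (hS : S.Nonempty)
    (h : HasSpecification (SGapShift S)) :
    ∃ L : ℕ, ∀ s ∈ S, (∃ t ∈ S, s < t) → ∃ t ∈ S, s < t ∧ t ≤ s + L := by
  obtain ⟨N, hN⟩ := h
  refine ⟨N + 1, fun s hs ⟨t, ht, hst⟩ => ?_⟩
  obtain ⟨w, hw, hword⟩ := hN _ _ (isWordOf_true_append_replicate ht hst)
    (isWordOf_replicate_append_true hs (Nat.zero_le s))
  obtain ⟨z, hz, hocc⟩ := (isWordOf_iff hS).1 hword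
  simp only [occursAt_append, occursAt_singleton, occursAt_replicate, List.length_append,
    List.length_singleton, List.length_replicate, hw, zero_add] at hocc
  push_cast [add_zero] at hocc
  obtain ⟨⟨⟨h₀, hzero⟩, -⟩, -, h₁⟩ := hocc
  obtain ⟨s', hs', -, hs'₁, hs'zero⟩ := GapConcat.exists_consecutiveOnes_of_eq_true hz h₀
  refine ⟨s', hs', not_le.1 fun hle => ?_, not_lt.1 fun hlt => ?_⟩
  · rw [show (0 : ℤ) + s' + 1 = 1 + s' by ring, hzero s' (by omega)] at hs'₁
    exact Bool.false_ne_true hs'₁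
  · rw [hs'zero (1 + (s + 1) + N) (by omega) (by omega)] at h₁
    exact Bool.false_ne_true h₁

theorem eq_one_of_forall_dvd_add_one (hS : S.Nonempty) (h : HasSpecification (SGapShift S))
    {d : ℕ} (hd : ∀ n ∈ S, d ∣ n + 1) : d = 1 := by
  obtain ⟨N, hN⟩ := h
  obtain ⟨s₀, hs₀⟩ := hS
  have key : ∀ c ≤ s₀, (d : ℤ) ∣ 1 + N + c := fun c hc => by
    obtain ⟨w, hw, hword⟩ := hN _ _ (isWordOf_replicate_append_true hs₀ (Nat.zero_le s₀))
      (isWordOf_replicate_append_true hs₀ hc)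
    obtain ⟨z, hz, hocc⟩ := (isWordOf_iff ⟨s₀, hs₀⟩).1 hword
    simp only [occursAt_append, occursAt_singleton, occursAt_replicate, List.length_append,
      List.length_singleton, List.length_replicate, hw, zero_add] at hocc
    obtain ⟨⟨⟨-, h₀⟩, -⟩, -, h₁⟩ := hocc
    simpa using GapConcat.dvd_sub_of_eq_true hd hz h₀ h₁
  have hs₀d : (d : ℤ) ∣ s₀ := by simpa using dvd_sub (key s₀ le_rfl) (key 0 (Nat.zero_le s₀))
  have : d ∣ 1 := (Nat.dvd_add_right (Int.natCast_dvd_natCast.1 hs₀d)).1 (hd s₀ hs₀)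
  exact Nat.dvd_one.1 this

theorem hasSpecification (hS : S.Nonempty) {K : ℕ} (hK : BoundedGaps S K) {F : ℕ}
    (hF : ∀ m ≥ F, m ∈ AddSubmonoid.closure ((· + 1) '' S)) : HasSpecification (SGapShift S) := by
  refine ⟨F + 2 * K + 1, fun u v hu hv => ?_⟩
  obtain ⟨x, hx, hxu⟩ := (isWordOf_iff hS).1 hu
  obtain ⟨y, hy, hyv⟩ := (isWordOf_iff hS).1 hv
  obtain ⟨z, hz, hzx, hzy⟩ := GapConcat.exists_splice hS hK hF le_rfl hx hy u.length
  refine ⟨List.ofFn fun k : Fin (F + 2 * K + 1) => z (u.length + k), by simp,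
    (isWordOf_iff hS).2 ⟨z, hz, ?_⟩⟩
  simp only [occursAt_append, List.length_append, List.length_ofFn]
  refine ⟨⟨hxu.congr fun k hk => hzx _ (by omega), ?_⟩, hyv.congr fun k hk => ?_⟩
  · simpa using occursAt_ofFn (x := z) (i := u.length) (F + 2 * K + 1)
  · rw [hzy _ (by push_cast; omega)]
    congr 1
    push_cast
    ring

end SGapShift

/-- The `S`-gap shift has the specification property iff the
gaps between consecutive elements of `S` are bounded and
`gcd {n + 1 : n ∈ S} = 1`. -/
theorem sGapShift_specification_iff
    (S : Set ℕ) (hS : S.Nonempty) :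
    HasSpecification (SGapShift S) ↔
      ((∃ L : ℕ, ∀ s ∈ S, (∃ t ∈ S, s < t) → ∃ t ∈ S, s < t ∧ t ≤ s + L) ∧
        ∀ d : ℕ, (∀ n ∈ S, d ∣ n + 1) → d = 1) := by
  refine ⟨fun h => ⟨SGapShift.exists_gap_bound_of_hasSpecification hS h,
    fun d hd => SGapShift.eq_one_of_forall_dvd_add_one hS h hd⟩, ?_⟩
  rintro ⟨⟨L, hL⟩, hgcd⟩
  obtain ⟨s₀, hs₀⟩ := hS
  obtain ⟨F, hF⟩ := Nat.exists_forall_ge_mem_closure_succ hgcd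
  exact SGapShift.hasSpecification ⟨s₀, hs₀⟩ (boundedGaps_of_forall_exists_le_add hs₀ hL) hF
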